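/- Let n : ℕ, A, M : Matrix (Fin n) (Fin n) ℝ, v : Fin n → ℝ, and let AGG : (Fin n → ℝ) → ℝ be any permutation-invariant aggregation, i.e. AGG (w ∘ σ) = AGG w for every w : Fin n → ℝ and every permutation σ of Fin n. Then for every permutation π of Fin n with permutation matrix P(π) and every d : ℕ, AGG ((((P(π) * A * P(π)ᵀ)^d) ∘ (P(π) * M * P(π)ᵀ)) *ᵥ (P(π) *ᵥ v)) = AGG ((A^d ∘ M) *ᵥ v). That is, the graph-labeling split value of TREE-G is invariant under relabeling the vertices (Lemma 4.1, graph-labeling case). -/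
import Mathlib


open Matrix

/-- The permutation matrix of `π`: `P(π) i j = 1` if `j = π i` and `0` otherwise. -/
def permMatrix {n : ℕ} (π : Equiv.Perm (Fin n)) : Matrix (Fin n) (Fin n) ℝ :=
  fun i j => if j = π i then 1 else 0

lemma permMatrix_conj {n : ℕ} (π : Equiv.Perm (Fin n)) (A : Matrix (Fin n) (Fin n) ℝ) :
    permMatrix π * A * (permMatrix π)ᵀ = A.submatrix π π := by
  ext i j
  simp [Matrix.mul_apply, permMatrix, Matrix.transpose_apply, Finset.sum_ite_eq,
    Finset.sum_ite_eq']

lemma permMatrix_mulVec {n : ℕ} (π : Equiv.Perm (Fin n)) (v : Fin n → ℝ) :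
    permMatrix π *ᵥ v = v ∘ π := by
  ext i
  simp [Matrix.mulVec, dotProduct, permMatrix, Finset.sum_ite_eq]

/-- The graph-labeling split value of TREE-G is invariant under relabeling the
vertices: for any permutation-invariant aggregation `AGG`, the aggregated masked
propagation agrees on the original and the relabeled graph. -/
theorem split_value_perm_invariant (n : ℕ) (A M : Matrix (Fin n) (Fin n) ℝ)
    (v : Fin n → ℝ) (AGG : (Fin n → ℝ) → ℝ)
    (hAGG : ∀ (w : Fin n → ℝ) (σ : Equiv.Perm (Fin n)), AGG (w ∘ σ) = AGG w)
    (π : Equiv.Perm (Fin n)) (d : ℕ) :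
    AGG ((Matrix.hadamard ((permMatrix π * A * (permMatrix π)ᵀ) ^ d)
        (permMatrix π * M * (permMatrix π)ᵀ)) *ᵥ (permMatrix π *ᵥ v)) =
      AGG ((Matrix.hadamard (A ^ d) M) *ᵥ v) := by
  rw [permMatrix_conj, permMatrix_conj, permMatrix_mulVec]
  have hpow : (A.submatrix π π) ^ d = (A ^ d).submatrix π π := by
    induction d with
    | zero => simp [Matrix.submatrix_one_equiv]
    | succ d ih =>
      rw [pow_succ, pow_succ, ih, Matrix.submatrix_mul_equiv]
  rw [hpow]
  have hhad : Matrix.hadamard ((A ^ d).submatrix π π) (M.submatrix π π)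
      = (Matrix.hadamard (A ^ d) M).submatrix π π := rfl
  rw [hhad]
  have hmv : ((Matrix.hadamard (A ^ d) M).submatrix π π) *ᵥ (v ∘ π)
      = ((Matrix.hadamard (A ^ d) M) *ᵥ v) ∘ π := by
    ext i
    simp [Matrix.mulVec, dotProduct, Matrix.submatrix_apply, Function.comp]
    exact Fintype.sum_equiv π _ _ (fun k => rfl)
  rw [hmv, hAGG]
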